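/- Fix 0 ≤ α < 1 and 1 < ε < 3^{(1-α)/(1+α)}. For the polynomials P_n(z) = z^n − 3^n on the annulus D_ε = {z : 3/ε < |z| < 3ε}, one has inf_{z ∈ D_ε} |P_n'(z)|/(1 + |P_n(z)|^α) → ∞ as n → ∞. -/

import Mathlib

/-!
On the annulus `3/ε < |z| < 3ε` the derivative `n z^(n-1)` has size at least about `(3/ε)^n`,
while `1 + |z^n - 3^n|^α` is at most about `(3ε)^(αn)`. The hypothesis on `ε` says exactly
`(3ε)^α < 3/ε`, so the quotient grows geometrically.
-/

open Filter

theorem norm_deriv_pow_sub_const (n : ℕ) (c z : ℂ) :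
    ‖deriv (fun w : ℂ => w ^ n - c) z‖ = n * ‖z‖ ^ (n - 1) := by
  rw [((hasDerivAt_pow n z).sub_const c).deriv, norm_mul, norm_pow, Complex.norm_natCast]

theorem norm_pow_sub_pow_le_two_mul_pow {z c : ℂ} {R : ℝ} (hz : ‖z‖ ≤ R) (hc : ‖c‖ ≤ R)
    (n : ℕ) : ‖z ^ n - c ^ n‖ ≤ 2 * R ^ n :=
  calc ‖z ^ n - c ^ n‖ ≤ ‖z‖ ^ n + ‖c‖ ^ n := by
        simpa only [norm_pow] using norm_sub_le (z ^ n) (c ^ n)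
    _ ≤ R ^ n + R ^ n := by gcongr
    _ = 2 * R ^ n := by ring

theorem one_add_rpow_le_two_mul_rpow {t B α : ℝ} (ht : 0 ≤ t) (htB : t ≤ B) (hB : 1 ≤ B)
    (hα : 0 ≤ α) : 1 + t ^ α ≤ 2 * B ^ α := by
  have h1 : 1 ≤ B ^ α := Real.one_le_rpow hB hα
  have h2 : t ^ α ≤ B ^ α := Real.rpow_le_rpow ht htB hα
  linarith

/-- On the annulus `r ≤ ‖z‖ ≤ R`, the numerator is at least `r ^ n / R` and the denominator at
most `2 * (2 * R ^ n) ^ α = 2 * 2 ^ α * (R ^ α) ^ n`. -/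
theorem div_pow_div_le_norm_deriv_div {r R α : ℝ} {c z : ℂ} {n : ℕ} (hr : 0 ≤ r) (hR : 1 ≤ R)
    (hα : 0 ≤ α) (hc : ‖c‖ ≤ R) (hrz : r ≤ ‖z‖) (hzR : ‖z‖ ≤ R) (hn : 1 ≤ n) :
    (r / R ^ α) ^ n / (2 * 2 ^ α * R) ≤
      ‖deriv (fun w : ℂ => w ^ n - c ^ n) z‖ / (1 + ‖z ^ n - c ^ n‖ ^ α) := by
  have hR0 : 0 < R := zero_lt_one.trans_le hR
  have hnum : r ^ n / R ≤ n * ‖z‖ ^ (n - 1) := by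
    have hsplit : ‖z‖ ^ n = ‖z‖ ^ (n - 1) * ‖z‖ := by rw [← pow_succ, Nat.sub_add_cancel hn]
    have hn1 : (1 : ℝ) ≤ n := by exact_mod_cast hn
    rw [div_le_iff₀ hR0]
    calc r ^ n ≤ ‖z‖ ^ n := by gcongr
      _ ≤ ‖z‖ ^ (n - 1) * R := by rw [hsplit]; gcongr
      _ ≤ n * ‖z‖ ^ (n - 1) * R := by gcongr; exact le_mul_of_one_le_left (by positivity) hn1
  have hden : 1 + ‖z ^ n - c ^ n‖ ^ α ≤ 2 * 2 ^ α * (R ^ α) ^ n := by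
    have hB : 1 ≤ 2 * R ^ n := by nlinarith [one_le_pow₀ (n := n) hR]
    calc 1 + ‖z ^ n - c ^ n‖ ^ α ≤ 2 * (2 * R ^ n) ^ α :=
          one_add_rpow_le_two_mul_rpow (norm_nonneg _)
            (norm_pow_sub_pow_le_two_mul_pow hzR hc n) hB hα
      _ = 2 * 2 ^ α * (R ^ α) ^ n := by
          rw [Real.mul_rpow zero_le_two (by positivity), ← Real.rpow_pow_comm hR0.le]; ring
  rw [norm_deriv_pow_sub_const]
  calc (r / R ^ α) ^ n / (2 * 2 ^ α * R) = r ^ n / R / (2 * 2 ^ α * (R ^ α) ^ n) := by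
        rw [div_pow]; field_simp
    _ ≤ n * ‖z‖ ^ (n - 1) / (1 + ‖z ^ n - c ^ n‖ ^ α) :=
        div_le_div₀ (by positivity) hnum (by positivity) hden

theorem rpow_lt_div_of_lt_rpow {a ε α : ℝ} (ha : 0 < a) (hε : 0 < ε) (hα : 0 ≤ α)
    (h : ε < a ^ ((1 - α) / (1 + α))) : (a * ε) ^ α < a / ε := by
  have hkey : ε ^ (1 + α) < a ^ (1 - α) := by
    have := Real.rpow_lt_rpow hε.le h (by linarith : (0 : ℝ) < 1 + α)
    rwa [← Real.rpow_mul ha.le, div_mul_cancel₀ _ (by linarith : (1 : ℝ) + α ≠ 0)] at this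
  rw [lt_div_iff₀ hε]
  calc (a * ε) ^ α * ε = a ^ α * ε ^ (1 + α) := by
        rw [Real.mul_rpow ha.le hε.le, Real.rpow_add hε, Real.rpow_one]; ring
    _ < a ^ α * a ^ (1 - α) := by gcongr
    _ = a := by rw [← Real.rpow_add ha]; norm_num

theorem stmt_3_general (α ε : ℝ) (hα0 : 0 ≤ α) (hε1 : 1 < ε)
    (hε : ε < (3 : ℝ) ^ ((1 - α) / (1 + α))) :
    ∀ M : ℝ, ∃ N : ℕ, ∀ n ≥ N, ∀ z : ℂ, 3 / ε < ‖z‖ → ‖z‖ < 3 * ε →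
      M ≤ ‖deriv (fun w : ℂ => w ^ n - 3 ^ n) z‖ / (1 + ‖z ^ n - (3 : ℂ) ^ n‖ ^ α) := by
  intro M
  have hε0 : 0 < ε := zero_lt_one.trans hε1
  have hq : 1 < 3 / ε / (3 * ε) ^ α :=
    (one_lt_div (by positivity)).2 (rpow_lt_div_of_lt_rpow three_pos hε0 hα0 hε)
  have htend := (tendsto_pow_atTop_atTop_of_one_lt hq).atTop_div_const
    (by positivity : (0 : ℝ) < 2 * 2 ^ α * (3 * ε))
  obtain ⟨N, hN⟩ := eventually_atTop.1 (htend.eventually_ge_atTop M)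
  refine ⟨max N 1, fun n hn z hz₁ hz₂ => (hN n (le_of_max_le_left hn)).trans ?_⟩
  exact div_pow_div_le_norm_deriv_div (by positivity) (by linarith) hα0
    (by norm_num; linarith) hz₁.le hz₂.le (le_of_max_le_right hn)

/-- For P_n(z) = z^n - 3^n on the annulus 3/ε < |z| < 3ε (with 1 < ε < 3^((1-α)/(1+α)),
0 ≤ α < 1), the infimum of |P_n'(z)|/(1+|P_n(z)|^α) over the annulus tends to ∞. -/
theorem stmt_3 (α ε : ℝ) (hα0 : 0 ≤ α) (hα1 : α < 1) (hε1 : 1 < ε)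
    (hε : ε < (3 : ℝ) ^ ((1 - α) / (1 + α))) :
    ∀ M : ℝ, ∃ N : ℕ, ∀ n ≥ N, ∀ z : ℂ, 3 / ε < ‖z‖ → ‖z‖ < 3 * ε →
      M ≤ ‖deriv (fun w : ℂ => w ^ n - 3 ^ n) z‖ / (1 + ‖z ^ n - (3 : ℂ) ^ n‖ ^ α) :=
  stmt_3_general α ε hα0 hε1 hε
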